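/- Let C = u·C₁ ⊕ (1-u)·C₂ be a linear code of length n over R = ℤ₉[u]/(u²-u). Then C is Euclidean self-dual if and only if C₁ and C₂ are both Euclidean self-dual codes over ℤ₉. -/
import Mathlib


open Polynomial

noncomputable section

/-- The ring `R = ℤ₉[u]/(u² - u)`. -/
abbrev R9 : Type := Polynomial (ZMod 9) ⧸ Ideal.span {(X : Polynomial (ZMod 9)) ^ 2 - X}

/-- The element `u` of `R`, the image of `X`. -/
def uu : R9 := Ideal.Quotient.mk _ (X : Polynomial (ZMod 9))

/-- The canonical embedding `ℤ₉ → R`. -/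
def ι : ZMod 9 →+* R9 :=
  (Ideal.Quotient.mk _).comp (Polynomial.C : ZMod 9 →+* Polynomial (ZMod 9))
/-- The word `u·x + (1-u)·y ∈ Rⁿ` built from `x, y ∈ ℤ₉ⁿ`. -/
def combine (n : ℕ) (x y : Fin n → ZMod 9) : Fin n → R9 :=
  fun i => uu * ι (x i) + (1 - uu) * ι (y i)

/-- `C₁ = {x ∈ ℤ₉ⁿ : ∃ y, ux + (1-u)y ∈ C}`. -/
def comp1 (n : ℕ) (S : Set (Fin n → R9)) : Set (Fin n → ZMod 9) :=
  {x | ∃ y, combine n x y ∈ S}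

/-- `C₂ = {y ∈ ℤ₉ⁿ : ∃ x, ux + (1-u)y ∈ C}`. -/
def comp2 (n : ℕ) (S : Set (Fin n → R9)) : Set (Fin n → ZMod 9) :=
  {y | ∃ x, combine n x y ∈ S}

/-- The Euclidean dual of a set of words over `R`. -/
def dualR (n : ℕ) (S : Set (Fin n → R9)) : Set (Fin n → R9) :=
  {x | ∀ c ∈ S, ∑ i, x i * c i = 0}

/-- The Euclidean dual of a set of words over `ℤ₉`. -/
def dualZ (n : ℕ) (S : Set (Fin n → ZMod 9)) : Set (Fin n → ZMod 9) :=
  {x | ∀ c ∈ S, ∑ i, x i * c i = 0}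

def π₁ : R9 →+* ZMod 9 :=
  Ideal.Quotient.lift _ (evalRingHom 1) (by
    intro a ha
    rw [Ideal.mem_span_singleton] at ha
    obtain ⟨c, rfl⟩ := ha
    simp)

def π₂ : R9 →+* ZMod 9 :=
  Ideal.Quotient.lift _ (evalRingHom 0) (by
    intro a ha
    rw [Ideal.mem_span_singleton] at ha
    obtain ⟨c, rfl⟩ := ha
    simp)

lemma π₁_ι (a : ZMod 9) : π₁ (ι a) = a := by simp [π₁, ι]
lemma π₂_ι (a : ZMod 9) : π₂ (ι a) = a := by simp [π₂, ι]
lemma π₁_uu : π₁ uu = 1 := by simp [π₁, uu]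
lemma π₂_uu : π₂ uu = 0 := by simp [π₂, uu]

lemma uu_sq : uu * uu = uu := by
  rw [uu, ← map_mul, Ideal.Quotient.eq, Ideal.mem_span_singleton]
  exact ⟨1, by ring⟩

lemma dvd_of_roots (q : Polynomial (ZMod 9)) (h0 : q.eval 0 = 0) (h1 : q.eval 1 = 0) :
    (X ^ 2 - X : Polynomial (ZMod 9)) ∣ q := by
  have hX : (X : Polynomial (ZMod 9)) ∣ q := by
    rw [Polynomial.X_dvd_iff, Polynomial.coeff_zero_eq_eval_zero]; exact h0
  obtain ⟨r, rfl⟩ := hX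
  have h1' : r.eval 1 = 0 := by simpa using h1
  have : (X - C 1 : Polynomial (ZMod 9)) ∣ r := (Polynomial.dvd_iff_isRoot).mpr h1'
  obtain ⟨s, rfl⟩ := this
  exact ⟨s, by simp only [map_one]; ring⟩

lemma decomp (r : R9) : uu * ι (π₁ r) + (1 - uu) * ι (π₂ r) = r := by
  obtain ⟨p, rfl⟩ := Ideal.Quotient.mk_surjective r
  have h1 : π₁ (Ideal.Quotient.mk _ p) = p.eval 1 := rfl
  have h2 : π₂ (Ideal.Quotient.mk _ p) = p.eval 0 := rfl
  rw [h1, h2]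
  show Ideal.Quotient.mk _ X * Ideal.Quotient.mk _ (C (p.eval 1)) +
    (1 - Ideal.Quotient.mk _ X) * Ideal.Quotient.mk _ (C (p.eval 0)) = Ideal.Quotient.mk _ p
  rw [← map_one (Ideal.Quotient.mk (Ideal.span {(X : Polynomial (ZMod 9)) ^ 2 - X})),
    ← map_sub, ← map_mul, ← map_mul, ← map_add, Ideal.Quotient.eq, Ideal.mem_span_singleton]
  apply dvd_of_roots <;> simp

lemma uu_mul_one_sub : uu * (1 - uu) = 0 := by
  rw [mul_sub, mul_one, uu_sq, sub_self]

lemma zero_iff (a b : ZMod 9) : uu * ι a + (1 - uu) * ι b = 0 ↔ a = 0 ∧ b = 0 := by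
  constructor
  · intro h
    constructor
    · have := congrArg π₁ h
      simpa [map_add, map_mul, map_sub, π₁_uu, π₁_ι] using this
    · have := congrArg π₂ h
      simpa [map_add, map_mul, map_sub, π₂_uu, π₂_ι] using this
  · rintro ⟨rfl, rfl⟩; simp

lemma prod_eq (a b a' b' : ZMod 9) :
    (uu * ι a + (1 - uu) * ι b) * (uu * ι a' + (1 - uu) * ι b') =
      uu * ι (a * a') + (1 - uu) * ι (b * b') := by
  rw [map_mul, map_mul]
  linear_combination (ι a * ι a' - ι a * ι b' - ι b * ι a' + ι b * ι b') * uu_sq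

lemma sum_eq (n : ℕ) (x y x' y' : Fin n → ZMod 9) :
    ∑ i, combine n x y i * combine n x' y' i =
      uu * ι (∑ i, x i * x' i) + (1 - uu) * ι (∑ i, y i * y' i) := by
  rw [map_sum, map_sum, Finset.mul_sum, Finset.mul_sum, ← Finset.sum_add_distrib]
  exact Finset.sum_congr rfl fun i _ => prod_eq _ _ _ _

lemma inner_zero_iff (n : ℕ) (x y x' y' : Fin n → ZMod 9) :
    ∑ i, combine n x y i * combine n x' y' i = 0 ↔
      (∑ i, x i * x' i = 0 ∧ ∑ i, y i * y' i = 0) := by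
  rw [sum_eq, zero_iff]

lemma combine_proj (n : ℕ) (w : Fin n → R9) :
    combine n (fun i => π₁ (w i)) (fun i => π₂ (w i)) = w :=
  funext fun i => decomp (w i)

lemma mem_combine (n : ℕ) (C : Submodule R9 (Fin n → R9)) (x y : Fin n → ZMod 9) :
    combine n x y ∈ C ↔ x ∈ comp1 n (C : Set (Fin n → R9)) ∧ y ∈ comp2 n (C : Set (Fin n → R9)) := by
  constructor
  · intro h; exact ⟨⟨y, h⟩, ⟨x, h⟩⟩
  · rintro ⟨⟨y', hy'⟩, ⟨x', hx'⟩⟩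
    have key : combine n x y = uu • combine n x y' + (1 - uu) • combine n x' y := by
      funext i
      simp only [combine, Pi.add_apply, Pi.smul_apply, smul_eq_mul]
      linear_combination (ι (y' i) + ι (x' i) - ι (x i) - ι (y i)) * uu_sq
    rw [key]
    exact C.add_mem (C.smul_mem _ hy') (C.smul_mem _ hx')

theorem stmt11 (n : ℕ) (C : Submodule R9 (Fin n → R9)) :
    (C : Set (Fin n → R9)) = dualR n (C : Set (Fin n → R9)) ↔
      (comp1 n (C : Set (Fin n → R9)) = dualZ n (comp1 n (C : Set (Fin n → R9))) ∧
       comp2 n (C : Set (Fin n → R9)) = dualZ n (comp2 n (C : Set (Fin n → R9)))) := by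
  constructor
  · intro h
    constructor
    · ext x
      constructor
      · rintro ⟨y, hy⟩ x' ⟨y', hy'⟩
        have hy2 : combine n x y ∈ dualR n (C : Set (Fin n → R9)) := h ▸ hy
        exact ((inner_zero_iff n x y x' y').mp (hy2 _ hy')).1
      · intro hx
        refine ⟨0, ?_⟩
        have hmem : combine n x 0 ∈ dualR n (C : Set (Fin n → R9)) := by
          intro w hw
          have hw' : combine n (fun i => π₁ (w i)) (fun i => π₂ (w i)) ∈ C := by
            rw [combine_proj]; exact hw
          rw [← combine_proj n w, inner_zero_iff]
          exact ⟨hx _ ⟨_, hw'⟩, by simp⟩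
        rwa [← h] at hmem
    · ext y
      constructor
      · rintro ⟨x, hx⟩ y' ⟨x', hx'⟩
        have hx2 : combine n x y ∈ dualR n (C : Set (Fin n → R9)) := h ▸ hx
        exact ((inner_zero_iff n x y x' y').mp (hx2 _ hx')).2
      · intro hy
        refine ⟨0, ?_⟩
        have hmem : combine n 0 y ∈ dualR n (C : Set (Fin n → R9)) := by
          intro w hw
          have hw' : combine n (fun i => π₁ (w i)) (fun i => π₂ (w i)) ∈ C := by
            rw [combine_proj]; exact hw
          rw [← combine_proj n w, inner_zero_iff]
          exact ⟨by simp, hy _ ⟨_, hw'⟩⟩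
        rwa [← h] at hmem
  · rintro ⟨h1, h2⟩
    apply Set.Subset.antisymm
    · intro w hw w' hw'
      have m1 : (fun i => π₁ (w i)) ∈ comp1 n (C : Set (Fin n → R9)) :=
        ⟨fun i => π₂ (w i), by rw [combine_proj]; exact hw⟩
      have m1' : (fun i => π₁ (w' i)) ∈ comp1 n (C : Set (Fin n → R9)) :=
        ⟨fun i => π₂ (w' i), by rw [combine_proj]; exact hw'⟩
      have m2 : (fun i => π₂ (w i)) ∈ comp2 n (C : Set (Fin n → R9)) :=
        ⟨fun i => π₁ (w i), by rw [combine_proj]; exact hw⟩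
      have m2' : (fun i => π₂ (w' i)) ∈ comp2 n (C : Set (Fin n → R9)) :=
        ⟨fun i => π₁ (w' i), by rw [combine_proj]; exact hw'⟩
      rw [← combine_proj n w, ← combine_proj n w', inner_zero_iff]
      exact ⟨(h1 ▸ m1 : _ ∈ dualZ n _) _ m1', (h2 ▸ m2 : _ ∈ dualZ n _) _ m2'⟩
    · intro w hw
      have key : ∀ (x' y' : Fin n → ZMod 9), combine n x' y' ∈ C →
          (∑ i, π₁ (w i) * x' i = 0 ∧ ∑ i, π₂ (w i) * y' i = 0) := by
        intro x' y' hc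
        have h0 := hw _ hc
        rw [← combine_proj n w, inner_zero_iff] at h0
        exact h0
      have p1 : (fun i => π₁ (w i)) ∈ comp1 n (C : Set (Fin n → R9)) := by
        rw [h1]
        rintro x' ⟨y', hy'⟩
        exact (key x' y' hy').1
      have p2 : (fun i => π₂ (w i)) ∈ comp2 n (C : Set (Fin n → R9)) := by
        rw [h2]
        rintro y' ⟨x', hx'⟩
        exact (key x' y' hx').2
      have := (mem_combine n C _ _).mpr ⟨p1, p2⟩
      rwa [combine_proj] at this
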